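/- arXiv:2501.15306 — 3 statements merged into one kernel-verified Lean document; each statement's English description precedes it below -/
import Mathlib

section
/- Let a < -2 be a real number. For all real numbers x, y with 0 < |y| ≤ |x|, one has | |x|^{1+a} - |y|^{1+a} | ≤ |1+a| · |y|^{1+a} · |x|^{-1} · |y - x|. -/
open Real

/-- Estimate (Cxy): for `a < -2` and `0 < |y| ≤ |x|`,
`||x|^(1+a) - |y|^(1+a)| ≤ |1+a| |y|^(1+a) |x|⁻¹ |y - x|`. -/
theorem stmt2 (a : ℝ) (ha : a < -2) (x y : ℝ) (hy : 0 < |y|) (hxy : |y| ≤ |x|) :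
    abs (|x| ^ (1 + a) - |y| ^ (1 + a)) ≤ |1 + a| * |y| ^ (1 + a) * |x|⁻¹ * |y - x| := by
  set X := |x| with hXdef
  set Y := |y| with hYdef
  have hX : 0 < X := lt_of_lt_of_le hy hxy
  set b : ℝ := 1 + a with hbdef
  set p : ℝ := -(1 + a) with hpdef
  have hp1 : 1 ≤ p := by simp only [hpdef]; linarith
  have habs : |1 + a| = p := by rw [abs_of_neg (by linarith : 1 + a < 0)]
  -- rpow monotone with negative exponent
  have hle : X ^ b ≤ Y ^ b := Real.rpow_le_rpow_of_nonpos hy hxy (by simp only [hbdef]; linarith)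
  have hYb : 0 < Y ^ b := Real.rpow_pos_of_pos hy b
  -- Bernoulli with s = Y/X - 1
  have hs : (-1 : ℝ) ≤ Y / X - 1 := by
    have : 0 < Y / X := div_pos hy hX
    linarith
  have hbern := one_add_mul_self_le_rpow_one_add hs hp1
  rw [add_sub_cancel] at hbern
  have hkey : Y ^ b * (Y / X) ^ p = X ^ b := by
    rw [Real.div_rpow hy.le hX.le, mul_div_assoc', ← Real.rpow_add hy]
    have h0 : b + p = 0 := by rw [hbdef, hpdef]; ring
    rw [h0, Real.rpow_zero, one_div, ← Real.rpow_neg hX.le]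
    congr 1
    rw [hbdef, hpdef]; ring
  -- main inequality with (X - Y)
  have hmain : Y ^ b - X ^ b ≤ p * Y ^ b * X⁻¹ * (X - Y) := by
    have h1 : 1 - (Y / X) ^ p ≤ p * (1 - Y / X) := by nlinarith
    have h2 : Y ^ b * (1 - (Y / X) ^ p) ≤ Y ^ b * (p * (1 - Y / X)) :=
      mul_le_mul_of_nonneg_left h1 hYb.le
    rw [mul_sub, mul_one, hkey] at h2
    have h3 : 1 - Y / X = X⁻¹ * (X - Y) := by field_simp
    calc Y ^ b - X ^ b ≤ Y ^ b * (p * (1 - Y / X)) := h2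
      _ = p * Y ^ b * X⁻¹ * (X - Y) := by rw [h3]; ring
  have hsub : X - Y ≤ |y - x| := by
    calc X - Y ≤ |x - y| := abs_sub_abs_le_abs_sub x y
      _ = |y - x| := abs_sub_comm x y
  have habsval : |X ^ b - Y ^ b| = Y ^ b - X ^ b := by
    rw [abs_sub_comm, abs_of_nonneg (by linarith)]
  rw [habsval, habs]
  calc Y ^ b - X ^ b ≤ p * Y ^ b * X⁻¹ * (X - Y) := hmain
    _ ≤ p * Y ^ b * X⁻¹ * |y - x| := by
        apply mul_le_mul_of_nonneg_left hsub
        positivity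
end

section
/- Let a ∈ (-5/2, -2) and t ≠ 0. Let φ ∈ C_0^∞(ℝ) with φ ≡ 1 on a neighborhood of the origin. Fix p with -1/(1+a) < p < ∞ and b with -1/(p(1+a)) ≤ b < 1. Then the Stein derivative 𝒟^b( e^{i t x |x|^{1+a}} φ(x) ), where 𝒟^b h(x) = ( ∫_ℝ |h(x)-h(y)|²/|x-y|^{1+2b} dy )^{1/2}, does NOT belong to L^p(ℝ). In particular, there is a constant c(t) > 0 such that 𝒟^b( e^{i t x |x|^{1+a}} φ )(x) ≥ c(t) |x|^{(1+a)b} for all sufficiently small x > 0, and |x|^{(1+a)b} is not in L^p near 0 under the stated hypotheses. -/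
open MeasureTheory ENNReal Real


lemma norm_exp_sub_exp_ge (θ₁ θ₂ : ℝ) :
    |Real.sin (θ₁ - θ₂)| ≤ ‖Complex.exp (Complex.I * θ₁) - Complex.exp (Complex.I * θ₂)‖ := by
  have h1 : Complex.exp (Complex.I * θ₁) - Complex.exp (Complex.I * θ₂)
      = Complex.exp (Complex.I * θ₂) * (Complex.exp (Complex.I * ((θ₁ - θ₂ : ℝ) : ℂ)) - 1) := by
    rw [mul_sub, ← Complex.exp_add, mul_one]
    push_cast
    ring_nf
  rw [h1, norm_mul]
  have h2 : ‖Complex.exp (Complex.I * θ₂)‖ = 1 := by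
    rw [mul_comm]
    exact Complex.norm_exp_ofReal_mul_I θ₂
  rw [h2, one_mul]
  have h3 : (Complex.exp (Complex.I * ((θ₁ - θ₂ : ℝ) : ℂ)) - 1).im = Real.sin (θ₁ - θ₂) := by
    rw [mul_comm, Complex.exp_mul_I]
    simp only [Complex.sub_im, Complex.add_im, Complex.mul_im, Complex.I_re, Complex.I_im,
      Complex.one_im, ← Complex.ofReal_sub, Complex.cos_ofReal_im, Complex.cos_ofReal_re,
      Complex.sin_ofReal_re, Complex.sin_ofReal_im]
    ring
  calc |Real.sin (θ₁ - θ₂)| = |(Complex.exp (Complex.I * ((θ₁ - θ₂ : ℝ) : ℂ)) - 1).im| := by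
        rw [h3]
    _ ≤ ‖Complex.exp (Complex.I * ((θ₁ - θ₂ : ℝ) : ℂ)) - 1‖ := Complex.abs_im_le_norm _

lemma jordan_abs {δ : ℝ} (hδ : |δ| ≤ π / 2) : 2 / π * |δ| ≤ |Real.sin δ| := by
  have h1 : 2 / π * |δ| ≤ Real.sin |δ| := Real.mul_le_sin (abs_nonneg δ) hδ
  have h2 : Real.sin |δ| ≤ |Real.sin δ| := by
    rcases abs_cases δ with ⟨h, _⟩ | ⟨h, _⟩
    · rw [h]; exact le_abs_self _
    · rw [h, Real.sin_neg]; exact neg_le_abs _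
  linarith

lemma mvt_rpow {a x y : ℝ} (ha : a < 0) (hx : 0 < x) (hxy : x < y) :
    ∃ ξ ∈ Set.Ioo x y, x ^ a - y ^ a = (-a) * ξ ^ (a - 1) * (y - x) := by
  have hcont : ContinuousOn (fun z : ℝ => z ^ a) (Set.Icc x y) := by
    apply ContinuousOn.rpow_const continuousOn_id
    intro z hz
    exact Or.inl (ne_of_gt (lt_of_lt_of_le hx hz.1))
  have hderiv : ∀ z ∈ Set.Ioo x y, HasDerivAt (fun z : ℝ => z ^ a) (a * z ^ (a - 1)) z := by
    intro z hz
    exact Real.hasDerivAt_rpow_const (Or.inl (ne_of_gt (lt_trans hx hz.1)))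
  obtain ⟨ξ, hξ, hs⟩ := exists_hasDerivAt_eq_slope (fun z : ℝ => z ^ a)
    (fun z => a * z ^ (a - 1)) hxy hcont hderiv
  refine ⟨ξ, hξ, ?_⟩
  rw [eq_div_iff (by linarith : y - x ≠ 0)] at hs
  linear_combination hs

/-- The one-dimensional Stein derivative of order `b`:
`𝒟^b h(x) = (∫ |h(x)-h(y)|²/|x-y|^{1+2b} dy)^{1/2}`. -/
noncomputable def steinDeriv1 (b : ℝ) (h : ℝ → ℂ) (x : ℝ) : ℝ≥0∞ :=
  (∫⁻ y, (‖h x - h y‖₊ : ℝ≥0∞) ^ (2 : ℕ) /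
      (‖x - y‖₊ : ℝ≥0∞) ^ (1 + 2 * b) ∂volume) ^ ((1 : ℝ) / 2)

set_option maxHeartbeats 1000000 in
/-- Non-integrability: for `a ∈ (-5/2,-2)`, `t ≠ 0`, `φ ∈ C₀^∞(ℝ)` with `φ ≡ 1` near the origin,
`-1/(1+a) < p < ∞` and `-1/(p(1+a)) ≤ b < 1`, the Stein derivative
`𝒟^b(e^{itx|x|^(1+a)} φ)` satisfies a lower bound `≥ c(t)|x|^{(1+a)b}` for small `x > 0` and does
NOT belong to `L^p(ℝ)`. -/
theorem stmt11 (a : ℝ) (ha1 : -(5/2) < a) (ha2 : a < -2) (t : ℝ) (ht : t ≠ 0)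
    (φ : ℝ → ℝ) (hφs : ContDiff ℝ (⊤ : ℕ∞) φ) (hφc : HasCompactSupport φ)
    (hφ1 : ∃ ε > 0, ∀ x : ℝ, |x| < ε → φ x = 1)
    (p b : ℝ) (hp : -1 / (1 + a) < p) (hb1 : -1 / (p * (1 + a)) ≤ b) (hb2 : b < 1) :
    (∃ c > 0, ∃ δ > 0, ∀ x : ℝ, 0 < x → x < δ →
        ENNReal.ofReal (c * x ^ ((1 + a) * b)) ≤
          steinDeriv1 b
            (fun z : ℝ =>
              Complex.exp (Complex.I * (t : ℂ) * ((z * |z| ^ (1 + a) : ℝ) : ℂ)) * (φ z : ℂ)) x) ∧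
    (∫⁻ x, (steinDeriv1 b
        (fun z : ℝ =>
          Complex.exp (Complex.I * (t : ℂ) * ((z * |z| ^ (1 + a) : ℝ) : ℂ)) * (φ z : ℂ)) x) ^ p
        ∂volume) = ⊤ := by
  obtain ⟨ε, hε, hφε⟩ := hφ1
  set h : ℝ → ℂ := fun z : ℝ =>
    Complex.exp (Complex.I * (t : ℂ) * ((z * |z| ^ (1 + a) : ℝ) : ℂ)) * (φ z : ℂ) with hh
  -- basic sign facts
  have h1a : 1 + a < -1 := by linarith
  have hp0 : 0 < p := lt_trans (div_pos_iff.mpr (Or.inr ⟨by norm_num, by linarith⟩)) hp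
  have hpa : p * (1 + a) < 0 := mul_neg_of_pos_of_neg hp0 (by linarith)
  have hb0 : 0 < b := lt_of_lt_of_le (div_pos_iff.mpr (Or.inr ⟨by norm_num, hpa⟩)) hb1
  have hbp : (1 + a) * b * p ≤ -1 := by
    have h2 := mul_le_mul_of_nonpos_right hb1 (le_of_lt hpa)
    have h3 : -1 / (p * (1 + a)) * (p * (1 + a)) = -1 :=
      div_mul_cancel₀ (-1) (ne_of_lt hpa)
    rw [h3] at h2
    calc (1 + a) * b * p = b * (p * (1 + a)) := by ring
      _ ≤ -1 := h2
  have ht' : 0 < |t| := abs_pos.mpr ht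
  have hA : 0 < -(2 + a) := by linarith
  set A : ℝ := -(2 + a) with hAdef
  set κ : ℝ := min (1/2) (π / (2 * |t| * A)) with hκdef
  have hκ0 : 0 < κ := lt_min (by norm_num) (div_pos Real.pi_pos (by positivity))
  have hκ1 : κ ≤ 1/2 := min_le_left _ _
  have hκt : |t| * A * κ ≤ π / 2 := by
    have h4 : κ ≤ π / (2 * |t| * A) := min_le_right _ _
    have h5 : |t| * A * κ ≤ |t| * A * (π / (2 * |t| * A)) :=
      mul_le_mul_of_nonneg_left h4 (by positivity)
    have h6 : |t| * A * (π / (2 * |t| * A)) = π / 2 := by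
      field_simp
    linarith
  set M : ℝ := 2 / π * |t| * A * (3/2 : ℝ) ^ (1 + a) with hMdef
  have hM0 : 0 < M := by
    have := Real.rpow_pos_of_pos (by norm_num : (0:ℝ) < 3/2) (1 + a)
    have := Real.pi_pos
    positivity
  set c : ℝ := M * κ ^ (1 - b) / 3 with hcdef
  have hc0 : 0 < c := by
    have := Real.rpow_pos_of_pos hκ0 (1 - b)
    positivity
  set δ : ℝ := min 1 (2 * ε / 3) with hδdef
  have hδ0 : 0 < δ := lt_min one_pos (by linarith)
  -- h z = exp(I t z^(2+a)) for 0 < z < ε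
  have hval : ∀ z : ℝ, 0 < z → z < ε →
      h z = Complex.exp (Complex.I * ((t * z ^ (2 + a) : ℝ) : ℂ)) := by
    intro z hz hzε
    have hphi : φ z = 1 := hφε z (by rw [abs_of_pos hz]; exact hzε)
    have h2a : z ^ (2 + a : ℝ) = z * z ^ (1 + a : ℝ) := by
      rw [show (2 + a : ℝ) = 1 + (1 + a) by ring, Real.rpow_add hz, Real.rpow_one]
    have hzz : z * |z| ^ (1 + a) = z ^ (2 + a) := by
      rw [abs_of_pos hz, h2a]
    rw [hh]
    simp only
    rw [hphi, hzz]
    push_cast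
    ring_nf
  -- the key lower bound
  have main : ∀ x : ℝ, 0 < x → x < δ →
      ENNReal.ofReal (c * x ^ ((1 + a) * b)) ≤ steinDeriv1 b h x := by
    intro x hx0 hxδ
    have hx1 : x < 1 := lt_of_lt_of_le hxδ (min_le_left _ _)
    have hxε : 3 * x / 2 < ε := by
      have := lt_of_lt_of_le hxδ (min_le_right _ _)
      linarith
    set r : ℝ := κ * x ^ (-1 - a) with hrdef
    have hxpow : 0 < x ^ (-1 - a) := Real.rpow_pos_of_pos hx0 _
    have hr0 : 0 < r := mul_pos hκ0 hxpow
    have hrx : r ≤ x / 2 := by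
      have e1 : x ^ (-1 - a : ℝ) = x * x ^ (-2 - a : ℝ) := by
        rw [show (-1 - a : ℝ) = 1 + (-2 - a) by ring, Real.rpow_add hx0, Real.rpow_one]
      have e2 : x ^ (-2 - a : ℝ) ≤ 1 :=
        Real.rpow_le_one hx0.le hx1.le (by linarith)
      have e3 : 0 < x ^ (-2 - a : ℝ) := Real.rpow_pos_of_pos hx0 _
      rw [hrdef, e1]
      have e4 : x * x ^ (-2 - a : ℝ) ≤ x * 1 := mul_le_mul_of_nonneg_left e2 hx0.le
      have e5 : κ * (x * x ^ (-2 - a : ℝ)) ≤ 1/2 * (x * 1) :=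
        mul_le_mul hκ1 e4 (by positivity) (by norm_num)
      linarith
    have hxr1 : x ^ (1 + a : ℝ) * x ^ (-1 - a : ℝ) = 1 := by
      rw [← Real.rpow_add hx0, show (1 + a) + (-1 - a) = (0:ℝ) by ring, Real.rpow_zero]
    have hx1a : 0 < x ^ (1 + a : ℝ) := Real.rpow_pos_of_pos hx0 _
    -- pointwise numerator bound
    have hpt : ∀ y ∈ Set.Ioo (x + r/2) (x + r), ENNReal.ofReal (M * x ^ (1 + a) * (r/2)) ≤ (‖h x - h y‖₊ : ℝ≥0∞) := by
      intro y hy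
      obtain ⟨hy1, hy2⟩ := hy
      have hyx : x < y := by linarith
      have hy3 : y ≤ 3 * x / 2 := by linarith
      have hy0 : 0 < y := lt_trans hx0 hyx
      have hyε : y < ε := lt_of_le_of_lt hy3 hxε
      rw [hval x hx0 (by linarith), hval y hy0 hyε]
      obtain ⟨ξ, hξ, heq⟩ := mvt_rpow (by linarith : (2 + a : ℝ) < 0) hx0 hyx
      rw [show -(2 + a) = A from rfl, show (2 + a - 1 : ℝ) = 1 + a by ring] at heq
      have hξ0 : 0 < ξ := lt_trans hx0 hξ.1
      have hξb1 : ξ ^ (1 + a : ℝ) ≤ x ^ (1 + a : ℝ) :=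
        Real.rpow_le_rpow_of_nonpos hx0 hξ.1.le (by linarith)
      have hξb2 : (3/2 : ℝ) ^ (1 + a) * x ^ (1 + a : ℝ) ≤ ξ ^ (1 + a : ℝ) := by
        have h32 : ξ ≤ 3/2 * x := by have := hξ.2; linarith
        have h33 := Real.rpow_le_rpow_of_nonpos hξ0 h32 (by linarith : (1 + a : ℝ) ≤ 0)
        rwa [Real.mul_rpow (by norm_num) hx0.le] at h33
      have hξp : 0 < ξ ^ (1 + a : ℝ) := Real.rpow_pos_of_pos hξ0 _
      set θ : ℝ := t * x ^ (2 + a) - t * y ^ (2 + a) with hθdef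
      have hθeq : θ = t * (A * ξ ^ (1 + a) * (y - x)) := by
        rw [hθdef]; linear_combination t * heq
      have habs : |θ| = |t| * (A * ξ ^ (1 + a) * (y - x)) := by
        have hnn : (0:ℝ) ≤ A * ξ ^ (1 + a) * (y - x) :=
          mul_nonneg (mul_nonneg hA.le hξp.le) (by linarith)
        rw [hθeq, abs_mul, abs_of_nonneg hnn]
      have hyxr : y - x ≤ r := by linarith
      have hθle : |θ| ≤ π / 2 := by
        rw [habs]
        have h7 : A * ξ ^ (1 + a : ℝ) * (y - x) ≤ A * x ^ (1 + a : ℝ) * r :=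
          mul_le_mul (mul_le_mul_of_nonneg_left hξb1 hA.le) hyxr (by linarith) (by positivity)
        have h8 : A * x ^ (1 + a : ℝ) * r = A * κ := by
          rw [hrdef]
          linear_combination (A * κ) * hxr1
        calc |t| * (A * ξ ^ (1 + a : ℝ) * (y - x)) ≤ |t| * (A * κ) := by
              rw [← h8]
              exact mul_le_mul_of_nonneg_left h7 (abs_nonneg t)
          _ = |t| * A * κ := by ring
          _ ≤ π / 2 := hκt
      have hsin := jordan_abs hθle
      have hnorm : M * x ^ (1 + a) * (r/2) ≤
          ‖Complex.exp (Complex.I * ((t * x ^ (2 + a) : ℝ) : ℂ)) -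
            Complex.exp (Complex.I * ((t * y ^ (2 + a) : ℝ) : ℂ))‖ := by
        have h9 := norm_exp_sub_exp_ge (t * x ^ (2 + a)) (t * y ^ (2 + a))
        have h10 : M * x ^ (1 + a) * (r/2) ≤ 2 / π * |θ| := by
          rw [habs, hMdef]
          have h11 : A * ((3/2 : ℝ) ^ (1 + a) * x ^ (1 + a)) * (r/2) ≤
              A * ξ ^ (1 + a : ℝ) * (y - x) := by
            apply mul_le_mul (mul_le_mul_of_nonneg_left hξb2 hA.le) (by linarith)
              (by linarith) (by positivity)
          have hπ := Real.pi_pos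
          have h12 : 0 < 2 / π * |t| := by positivity
          have h13 := mul_le_mul_of_nonneg_left h11 h12.le
          calc 2 / π * |t| * A * (3/2 : ℝ) ^ (1 + a) * x ^ (1 + a : ℝ) * (r/2)
              = 2 / π * |t| * (A * ((3/2 : ℝ) ^ (1 + a) * x ^ (1 + a : ℝ)) * (r/2)) := by ring
            _ ≤ 2 / π * |t| * (A * ξ ^ (1 + a : ℝ) * (y - x)) := h13
            _ = 2 / π * (|t| * (A * ξ ^ (1 + a : ℝ) * (y - x))) := by ring
        calc M * x ^ (1 + a) * (r/2) ≤ 2 / π * |θ| := h10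
          _ ≤ |Real.sin θ| := hsin
          _ = |Real.sin (t * x ^ (2 + a) - t * y ^ (2 + a))| := by rw [hθdef]
          _ ≤ _ := h9
      rw [← enorm_eq_nnnorm, ← ofReal_norm]
      exact ENNReal.ofReal_le_ofReal hnorm
    -- denominator bound
    have hden : ∀ y ∈ Set.Ioo (x + r/2) (x + r), ((‖x - y‖₊ : ℝ≥0∞)) ^ (1 + 2*b) ≤ (ENNReal.ofReal r) ^ (1 + 2*b) := by
      intro y hy
      obtain ⟨hy1, hy2⟩ := hy
      apply ENNReal.rpow_le_rpow _ (by linarith)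
      rw [← enorm_eq_nnnorm, ← ofReal_norm, Real.norm_eq_abs, abs_sub_comm, abs_of_pos (by linarith)]
      exact ENNReal.ofReal_le_ofReal (by linarith)
    set L : ℝ≥0∞ := ENNReal.ofReal (M * x ^ (1 + a) * (r/2)) ^ (2:ℕ) /
      (ENNReal.ofReal r) ^ (1 + 2*b) with hLdef
    have hL : ∀ y ∈ Set.Ioo (x + r/2) (x + r), L ≤ (‖h x - h y‖₊ : ℝ≥0∞) ^ (2:ℕ) / (‖x - y‖₊ : ℝ≥0∞) ^ (1 + 2*b) := by
      intro y hy
      exact ENNReal.div_le_div (pow_le_pow_left₀ zero_le (hpt y hy) 2) (hden y hy)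
    have hint : L * ENNReal.ofReal (r/2) ≤
        ∫⁻ y, (‖h x - h y‖₊ : ℝ≥0∞) ^ (2:ℕ) / (‖x - y‖₊ : ℝ≥0∞) ^ (1 + 2*b) ∂volume := by
      calc L * ENNReal.ofReal (r/2)
          = ∫⁻ y, (Set.Ioo (x + r/2) (x + r)).indicator (fun _ => L) y ∂volume := by
            rw [lintegral_indicator_const measurableSet_Ioo, Real.volume_Ioo,
              show x + r - (x + r/2) = r/2 by ring]
        _ ≤ _ := by
            apply lintegral_mono
            intro y
            by_cases hy : y ∈ Set.Ioo (x + r/2) (x + r)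
            · rw [Set.indicator_of_mem hy]; exact hL y hy
            · rw [Set.indicator_of_notMem hy]; exact zero_le
    -- conclude
    have hQ0 : 0 < (M * x ^ (1 + a) * (r/2)) ^ 2 / r ^ (1 + 2*b : ℝ) * (r/2) := by
      have := Real.rpow_pos_of_pos hr0 (1 + 2*b)
      positivity
    have hLof : L * ENNReal.ofReal (r/2) =
        ENNReal.ofReal ((M * x ^ (1 + a) * (r/2)) ^ 2 / r ^ (1 + 2*b : ℝ) * (r/2)) := by
      rw [hLdef, ← ENNReal.ofReal_pow (by positivity), ENNReal.ofReal_rpow_of_pos hr0,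
        ← ENNReal.ofReal_div_of_pos (Real.rpow_pos_of_pos hr0 _),
        ← ENNReal.ofReal_mul (by positivity)]
    rw [steinDeriv1]
    calc ENNReal.ofReal (c * x ^ ((1 + a) * b))
        ≤ (L * ENNReal.ofReal (r/2)) ^ ((1:ℝ)/2) := by
          rw [hLof, ENNReal.ofReal_rpow_of_pos hQ0]
          apply ENNReal.ofReal_le_ofReal
          rw [← Real.sqrt_eq_rpow]
          have hcx : 0 ≤ c * x ^ ((1 + a) * b : ℝ) := by
            have := Real.rpow_pos_of_pos hx0 ((1 + a) * b)
            positivity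
          rw [show c * x ^ ((1 + a) * b : ℝ) =
            Real.sqrt ((c * x ^ ((1 + a) * b : ℝ)) ^ 2) from (Real.sqrt_sq hcx).symm]
          apply Real.sqrt_le_sqrt
          -- final real inequality
          have e2 : (r : ℝ) ^ (2:ℕ) = r ^ (2:ℝ) := by
            rw [show (2:ℝ) = ((2:ℕ) : ℝ) by norm_num, Real.rpow_natCast]
          have e3 : r ^ (2:ℝ) / r ^ (1 + 2*b : ℝ) = r ^ (1 - 2*b : ℝ) := by
            rw [← Real.rpow_sub hr0, show (2 : ℝ) - (1 + 2*b) = 1 - 2*b by ring]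
          have e4 : r ^ (1 - 2*b : ℝ) * r = r ^ (2 - 2*b : ℝ) := by
            nth_rewrite 2 [show r = r ^ (1:ℝ) from (Real.rpow_one r).symm]
            rw [← Real.rpow_add hr0, show (1 : ℝ) - 2*b + 1 = 2 - 2*b by ring]
          have e5 : r ^ (2 - 2*b : ℝ) = κ ^ (2 - 2*b : ℝ) * x ^ ((-1 - a) * (2 - 2*b) : ℝ) := by
            rw [hrdef, Real.mul_rpow hκ0.le hxpow.le, ← Real.rpow_mul hx0.le]
          have hrp : (0:ℝ) < r ^ (1 + 2*b : ℝ) := Real.rpow_pos_of_pos hr0 _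
          have e6 : (M * x ^ (1 + a : ℝ) * (r/2)) ^ 2 / r ^ (1 + 2*b : ℝ) * (r/2)
              = M^2/8 * ((x ^ (1 + a : ℝ))^2 * (r ^ (2:ℝ) / r ^ (1 + 2*b : ℝ) * r)) := by
            rw [← e2]
            field_simp
            ring
          have e7 : (x ^ (1 + a : ℝ))^2 = x ^ (2 + 2*a : ℝ) := by
            rw [sq, ← Real.rpow_add hx0, show (1 + a) + (1 + a) = (2 + 2*a : ℝ) by ring]
          have e9 : (κ ^ (1 - b : ℝ))^2 = κ ^ (2 - 2*b : ℝ) := by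
            rw [sq, ← Real.rpow_add hκ0, show (1 - b) + (1 - b) = (2 - 2*b : ℝ) by ring]
          have e10 : (x ^ ((1 + a) * b : ℝ))^2 = x ^ (2 * ((1 + a) * b) : ℝ) := by
            rw [sq, ← Real.rpow_add hx0]
            norm_num
            ring_nf
          have e11 : x ^ (2 + 2*a : ℝ) * x ^ ((-1 - a) * (2 - 2*b) : ℝ)
              = x ^ (2 * ((1 + a) * b) : ℝ) := by
            rw [← Real.rpow_add hx0, show (2 + 2*a) + (-1 - a) * (2 - 2*b)
              = (2 * ((1 + a) * b) : ℝ) by ring]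
          have hκp : (0:ℝ) < κ ^ (2 - 2*b : ℝ) := Real.rpow_pos_of_pos hκ0 _
          calc (c * x ^ ((1 + a) * b : ℝ))^2
              = M^2 * (κ ^ (1 - b : ℝ))^2 / 9 * (x ^ ((1 + a) * b : ℝ))^2 := by
                rw [hcdef]; ring
            _ = M^2 * κ ^ (2 - 2*b : ℝ) / 9 * x ^ (2 * ((1 + a) * b) : ℝ) := by
                rw [e9, e10]
            _ ≤ M^2 * κ ^ (2 - 2*b : ℝ) / 8 * x ^ (2 * ((1 + a) * b) : ℝ) := by
                apply mul_le_mul_of_nonneg_right _ (Real.rpow_nonneg hx0.le _)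
                have hu : (0:ℝ) ≤ M^2 * κ ^ (2 - 2*b : ℝ) :=
                  mul_nonneg (sq_nonneg M) hκp.le
                linarith
            _ = (M * x ^ (1 + a : ℝ) * (r/2)) ^ 2 / r ^ (1 + 2*b : ℝ) * (r/2) := by
                rw [e6, e3, e4, e5, e7, ← e11]
                ring
        _ ≤ _ := ENNReal.rpow_le_rpow hint (by norm_num)
  refine ⟨⟨c, hc0, δ, hδ0, main⟩, ?_⟩
  have hbig : ∫⁻ x in Set.Ioo (0:ℝ) δ,
      ENNReal.ofReal ((c * x ^ ((1 + a) * b : ℝ)) ^ p) ∂volume = ⊤ := by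
    by_contra hne
    have hmeas : ContinuousOn (fun x : ℝ => (c * x ^ ((1 + a) * b : ℝ)) ^ p)
        (Set.Ioo 0 δ) := by
      apply ContinuousOn.rpow_const
      · exact continuousOn_const.mul
          (ContinuousOn.rpow_const continuousOn_id fun x hx => Or.inl (ne_of_gt hx.1))
      · intro x hx
        exact Or.inl (ne_of_gt (mul_pos hc0 (Real.rpow_pos_of_pos hx.1 _)))
    have hInt : IntegrableOn (fun x : ℝ => (c * x ^ ((1 + a) * b : ℝ)) ^ p) (Set.Ioo 0 δ) := by
      refine ⟨hmeas.aestronglyMeasurable measurableSet_Ioo, ?_⟩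
      rw [hasFiniteIntegral_iff_ofReal ?_]
      · exact lt_top_iff_ne_top.mpr hne
      · filter_upwards [ae_restrict_mem measurableSet_Ioo] with x hx
        exact Real.rpow_nonneg
          (mul_nonneg hc0.le (Real.rpow_nonneg hx.1.le _)) p
    have h3 : IntegrableOn (fun x : ℝ => c ^ p * x ^ ((1 + a) * b * p : ℝ)) (Set.Ioo 0 δ) := by
      apply hInt.congr_fun ?_ measurableSet_Ioo
      intro x hx
      simp only
      rw [Real.mul_rpow hc0.le (Real.rpow_nonneg hx.1.le _), ← Real.rpow_mul hx.1.le]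
    have h4 : IntegrableOn (fun x : ℝ => ((c : ℝ) ^ p)⁻¹ * (c ^ p * x ^ ((1 + a) * b * p : ℝ)))
        (Set.Ioo 0 δ) := h3.const_mul _
    have h5 : IntegrableOn (fun x : ℝ => x ^ ((1 + a) * b * p : ℝ)) (Set.Ioo 0 δ) := by
      apply h4.congr_fun ?_ measurableSet_Ioo
      intro x hx
      simp only
      rw [← mul_assoc, inv_mul_cancel₀ (ne_of_gt (Real.rpow_pos_of_pos hc0 p)), one_mul]
    rw [intervalIntegral.integrableOn_Ioo_rpow_iff hδ0] at h5
    linarith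
  rw [eq_top_iff]
  calc (⊤ : ℝ≥0∞)
      = ∫⁻ x in Set.Ioo (0:ℝ) δ,
          ENNReal.ofReal ((c * x ^ ((1 + a) * b : ℝ)) ^ p) ∂volume := hbig.symm
    _ = ∫⁻ x, (Set.Ioo (0:ℝ) δ).indicator
          (fun x => ENNReal.ofReal ((c * x ^ ((1 + a) * b : ℝ)) ^ p)) x ∂volume :=
        (lintegral_indicator measurableSet_Ioo _).symm
    _ ≤ ∫⁻ x, (steinDeriv1 b h x) ^ p ∂volume := by
        apply lintegral_mono
        intro x
        by_cases hx : x ∈ Set.Ioo (0:ℝ) δ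
        · rw [Set.indicator_of_mem hx,
            ← ENNReal.ofReal_rpow_of_pos
              (mul_pos hc0 (Real.rpow_pos_of_pos hx.1 _))]
          exact ENNReal.rpow_le_rpow (main x hx.1 hx.2) hp0.le
        · rw [Set.indicator_of_notMem hx]; exact zero_le
end

section
/- Let a ∈ (-5/2, -2), b ∈ (0,1), t₂ > 0, and let c ∈ (0,1) be sufficiently small (depending on a, b, t₂). Define 𝒟^b h(ξ) = ( ∫_ℝ |h(ξ)-h(η)|²/|ξ-η|^{1+2b} dη )^{1/2}. Then there exists a constant κ > 0 (depending on t₂, a, b) such that for all ξ with 0 < |ξ| ≤ c, 𝒟^b( e^{i t₂ ξ|ξ|^{1+a}} )(ξ) ≥ κ |ξ|^{(1+a) b}. -/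
open MeasureTheory ENNReal Real

/-! On the near region `x < η ≤ x + δ x^{-(1+a)}` (for `0 < x ≤ 1`) the phase difference
`t₂ (x^{2+a} - η^{2+a})` is, by the mean value theorem, comparable to `t₂ x^{1+a} (η - x)` and
at most `π`, so Jordan's inequality bounds `|e^{iα} - e^{iβ}|` below by `(2/π)|α - β|`. The
integrand is then `≳ x^{2(1+a)} (η - x)^{1-2b}`, whose integral over the near region is
`≍ x^{2(1+a)b}`. Negative `ξ` reduce to positive ones because `h(-η) = conj (h η)`. -/

lemma two_div_pi_mul_abs_le_norm_exp_I_mul_sub_one {x : ℝ} (hx : |x| ≤ π) :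
    2 / π * |x| ≤ ‖Complex.exp (Complex.I * x) - 1‖ := by
  have h := Real.mul_abs_le_abs_sin (x := x / 2) (by rw [abs_div, abs_two]; linarith)
  rw [abs_div, abs_two] at h
  rw [Complex.norm_exp_I_mul_ofReal_sub_one, norm_mul, Real.norm_eq_abs, Real.norm_eq_abs, abs_two]
  linarith

lemma two_div_pi_mul_abs_sub_le_norm_exp_I_mul_sub {α β : ℝ} (h : |α - β| ≤ π) :
    2 / π * |α - β| ≤ ‖Complex.exp (Complex.I * α) - Complex.exp (Complex.I * β)‖ := by
  have hfactor : Complex.exp (Complex.I * α) - Complex.exp (Complex.I * β) =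
      Complex.exp (Complex.I * β) * (Complex.exp (Complex.I * ↑(α - β)) - 1) := by
    rw [mul_sub, ← Complex.exp_add]
    push_cast
    ring_nf
  rw [hfactor, norm_mul, Complex.norm_exp_I_mul_ofReal, one_mul]
  exact two_div_pi_mul_abs_le_norm_exp_I_mul_sub_one h

lemma Real.rpow_sub_rpow_bounds_of_nonpos {p x y : ℝ} (hp : p ≤ 0) (hx : 0 < x) (hxy : x ≤ y) :
    -p * y ^ (p - 1) * (y - x) ≤ x ^ p - y ^ p ∧ x ^ p - y ^ p ≤ -p * x ^ (p - 1) * (y - x) := by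
  rcases hxy.eq_or_lt with rfl | hlt
  · simp
  obtain ⟨c, ⟨hxc, hcy⟩, hc⟩ := exists_hasDerivAt_eq_slope (fun z => z ^ p)
    (fun z => p * z ^ (p - 1)) hlt
    (fun z hz =>
      (Real.continuousAt_rpow_const _ _ (Or.inl (hx.trans_le hz.1).ne')).continuousWithinAt)
    (fun z hz => Real.hasDerivAt_rpow_const (Or.inl (hx.trans hz.1).ne'))
  have hdiff : x ^ p - y ^ p = -p * c ^ (p - 1) * (y - x) := by
    rw [neg_mul, hc]
    field_simp [sub_ne_zero.mpr hlt.ne']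
    ring
  have hp_neg : 0 ≤ -p := by linarith
  have hyx : 0 ≤ y - x := by linarith
  rw [hdiff]
  constructor
  · have hyc := Real.rpow_le_rpow_of_nonpos (hx.trans hxc) hcy.le (by linarith : p - 1 ≤ 0)
    exact mul_le_mul_of_nonneg_right (mul_le_mul_of_nonneg_left hyc hp_neg) hyx
  · have hcx := Real.rpow_le_rpow_of_nonpos hx hxc.le (by linarith : p - 1 ≤ 0)
    exact mul_le_mul_of_nonneg_right (mul_le_mul_of_nonneg_left hcx hp_neg) hyx

lemma two_div_pi_mul_le_norm_exp_rpow_sub {q t x s : ℝ} (hq : q + 1 ≤ 0) (ht : 0 ≤ t) (hx : 0 < x)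
    (hs : 0 ≤ s) (hsx : s ≤ x / 2) (hsπ : t * -(q + 1) * x ^ q * s ≤ π) :
    2 / π * (t * -(q + 1) * (3 / 2) ^ q) * x ^ q * s ≤
      ‖Complex.exp (Complex.I * t * ↑(x ^ (q + 1))) -
        Complex.exp (Complex.I * t * ↑((x + s) ^ (q + 1)))‖ := by
  obtain ⟨hlow, hup⟩ := Real.rpow_sub_rpow_bounds_of_nonpos hq hx (le_add_of_nonneg_right hs)
  simp only [add_sub_cancel_right, add_sub_cancel_left] at hlow hup
  set Δ := t * x ^ (q + 1) - t * (x + s) ^ (q + 1)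
  have hA : 0 ≤ t * -(q + 1) := mul_nonneg ht (by linarith)
  have hΔ_le : Δ ≤ t * -(q + 1) * x ^ q * s := by
    have := mul_le_mul_of_nonneg_left hup ht
    simp only [Δ]
    linarith
  have hΔ_ge : t * -(q + 1) * (3 / 2) ^ q * x ^ q * s ≤ Δ := by
    have h32 : (3 / 2 : ℝ) ^ q * x ^ q ≤ (x + s) ^ q := by
      rw [← Real.mul_rpow (by norm_num) hx.le]
      exact Real.rpow_le_rpow_of_nonpos (by positivity) (by linarith) (by linarith)
    calc t * -(q + 1) * (3 / 2) ^ q * x ^ q * s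
        = t * -(q + 1) * ((3 / 2) ^ q * x ^ q) * s := by ring
      _ ≤ t * -(q + 1) * (x + s) ^ q * s := by gcongr
      _ ≤ Δ := by have := mul_le_mul_of_nonneg_left hlow ht; simp only [Δ]; linarith
  have hΔ_nonneg : 0 ≤ Δ := le_trans (by positivity) hΔ_ge
  have hchord := two_div_pi_mul_abs_sub_le_norm_exp_I_mul_sub
    (α := t * x ^ (q + 1)) (β := t * (x + s) ^ (q + 1)) (by rw [abs_of_nonneg hΔ_nonneg]; linarith)
  push_cast at hchord
  rw [abs_of_nonneg hΔ_nonneg, ← mul_assoc, ← mul_assoc] at hchord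
  calc 2 / π * (t * -(q + 1) * (3 / 2) ^ q) * x ^ q * s
      = 2 / π * (t * -(q + 1) * (3 / 2) ^ q * x ^ q * s) := by ring
    _ ≤ 2 / π * Δ := by gcongr
    _ ≤ _ := hchord

lemma ofReal_mul_rpow_div_sqrt_le_steinDeriv1 {b : ℝ} (hb : b < 1) {h : ℝ → ℂ} {x r L : ℝ}
    (hr : 0 < r) (hL : 0 ≤ L) (hh : ∀ s ∈ Set.Ioc 0 r, L * s ≤ ‖h x - h (x + s)‖) :
    ENNReal.ofReal (L * r ^ (1 - b) / √(2 - 2 * b)) ≤ steinDeriv1 b h x := by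
  set F : ℝ → ℝ≥0∞ := fun y => (‖h x - h y‖₊ : ℝ≥0∞) ^ (2 : ℕ) / (‖x - y‖₊ : ℝ≥0∞) ^ (1 + 2 * b)
  have hpointwise : ∀ s ∈ Set.Ioc 0 r, ENNReal.ofReal (L ^ 2 * s ^ (1 - 2 * b)) ≤ F (x + s) := by
    rintro s ⟨hs, hsr⟩
    have hquot : L ^ 2 * s ^ (1 - 2 * b) = (L * s) ^ 2 / s ^ (1 + 2 * b) := by
      rw [_root_.eq_div_iff (by positivity), mul_assoc, ← Real.rpow_add hs,
        show 1 - 2 * b + (1 + 2 * b) = (2 : ℕ) by norm_num, Real.rpow_natCast]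
      ring
    have hden : (‖x - (x + s)‖₊ : ℝ≥0∞) ^ (1 + 2 * b) = ENNReal.ofReal (s ^ (1 + 2 * b)) := by
      rw [sub_add_cancel_left, nnnorm_neg, ← enorm_eq_nnnorm, ← ofReal_norm,
        Real.norm_of_nonneg hs.le, ENNReal.ofReal_rpow_of_pos hs]
    have hnum : ENNReal.ofReal ((L * s) ^ 2) ≤ (‖h x - h (x + s)‖₊ : ℝ≥0∞) ^ (2 : ℕ) := by
      rw [ENNReal.ofReal_pow (by positivity), ← enorm_eq_nnnorm, ← ofReal_norm]
      gcongr
      exact hh s ⟨hs, hsr⟩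
    simp only [F, hquot, hden]
    rw [ENNReal.ofReal_div_of_pos (by positivity)]
    gcongr
  have h2b : 0 < 2 - 2 * b := by linarith
  have hintegral : ∫⁻ s in Set.Ioc 0 r, ENNReal.ofReal (L ^ 2 * s ^ (1 - 2 * b)) =
      ENNReal.ofReal (L ^ 2 * (r ^ (2 - 2 * b) / (2 - 2 * b))) := by
    have hexp : 1 - 2 * b + 1 = 2 - 2 * b := by ring
    have hint : IntegrableOn (fun s : ℝ => L ^ 2 * s ^ (1 - 2 * b)) (Set.Ioc 0 r) :=
      ((intervalIntegrable_iff_integrableOn_Ioc_of_le hr.le).mp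
        (intervalIntegral.intervalIntegrable_rpow' (by linarith))).const_mul _
    rw [← ofReal_integral_eq_lintegral_ofReal hint, ← intervalIntegral.integral_of_le hr.le,
      intervalIntegral.integral_const_mul, integral_rpow (Or.inl (by linarith)), hexp,
      Real.zero_rpow (by linarith), sub_zero]
    filter_upwards [ae_restrict_mem measurableSet_Ioc] with s hs
    exact mul_nonneg (sq_nonneg L) (Real.rpow_nonneg hs.1.le _)
  have hroot : L * r ^ (1 - b) / √(2 - 2 * b) =
      (L ^ 2 * (r ^ (2 - 2 * b) / (2 - 2 * b))) ^ ((1 : ℝ) / 2) := by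
    have hsq : r ^ (2 - 2 * b) = (r ^ (1 - b)) ^ 2 := by
      rw [← Real.rpow_natCast, ← Real.rpow_mul hr.le]
      ring_nf
    rw [← Real.sqrt_eq_rpow, Real.sqrt_mul (sq_nonneg L), Real.sqrt_sq hL,
      Real.sqrt_div' _ h2b.le, hsq, Real.sqrt_sq (by positivity), mul_div_assoc]
  calc ENNReal.ofReal (L * r ^ (1 - b) / √(2 - 2 * b))
      = (∫⁻ s in Set.Ioc 0 r, ENNReal.ofReal (L ^ 2 * s ^ (1 - 2 * b))) ^ ((1 : ℝ) / 2) := by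
        rw [hintegral, hroot, ENNReal.ofReal_rpow_of_nonneg (by positivity) (by norm_num)]
    _ ≤ (∫⁻ s in Set.Ioc 0 r, F (x + s)) ^ ((1 : ℝ) / 2) :=
        ENNReal.rpow_le_rpow (setLIntegral_mono' measurableSet_Ioc hpointwise) (by norm_num)
    _ ≤ (∫⁻ s, F (x + s)) ^ ((1 : ℝ) / 2) :=
        ENNReal.rpow_le_rpow (setLIntegral_le_lintegral _ _) (by norm_num)
    _ = steinDeriv1 b h x := by rw [lintegral_add_left_eq_self]; rfl

lemma steinDeriv1_neg_of_conj {h : ℝ → ℂ} (hh : ∀ y, h (-y) = starRingEnd ℂ (h y)) (b x : ℝ) :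
    steinDeriv1 b h (-x) = steinDeriv1 b h x := by
  unfold steinDeriv1
  rw [← lintegral_neg_eq_self]
  congr 2 with y
  rw [hh, hh, ← map_sub, RCLike.nnnorm_conj, neg_sub_neg, ← neg_sub x y, nnnorm_neg]

lemma exp_I_mul_neg_mul_abs_rpow (t q y : ℝ) :
    Complex.exp (Complex.I * t * ↑(-y * |-y| ^ q)) =
      starRingEnd ℂ (Complex.exp (Complex.I * t * ↑(y * |y| ^ q))) := by
  rw [← Complex.exp_conj, abs_neg, neg_mul]
  simp only [map_mul, Complex.conj_I, Complex.conj_ofReal, Complex.ofReal_neg]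
  ring_nf

lemma mul_abs_rpow_of_pos {y : ℝ} (hy : 0 < y) (q : ℝ) : y * |y| ^ q = y ^ (q + 1) := by
  rw [abs_of_pos hy, Real.rpow_add_one hy.ne', mul_comm]

lemma exists_ofReal_mul_rpow_le_steinDeriv1_exp_phase {a b t : ℝ} (ha : a < -2) (hb : b < 1)
    (ht : 0 < t) :
    ∃ κ > 0, ∀ x : ℝ, 0 < x → x ≤ 1 → ENNReal.ofReal (κ * x ^ ((1 + a) * b)) ≤
      steinDeriv1 b (fun η : ℝ => Complex.exp (Complex.I * t * ↑(η * |η| ^ (1 + a)))) x := by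
  set q := 1 + a
  have hq : q + 1 ≤ 0 := by linarith
  have hA : 0 < t * -(q + 1) := mul_pos ht (by linarith)
  set M := 2 / π * (t * -(q + 1) * (3 / 2) ^ q)
  -- `δ ≤ 1/2` keeps the near region inside `(x, 3x/2]`, `δ ≤ π / (t|q+1|)` keeps the phase gap
  -- below `π`.
  set δ := min (1 / 2) (π / (t * -(q + 1)))
  have hδ : 0 < δ := lt_min (by norm_num) (by positivity)
  have hδπ : t * -(q + 1) * δ ≤ π := by
    rw [← le_div_iff₀' hA]
    exact min_le_right _ _
  refine ⟨M * δ ^ (1 - b) / √(2 - 2 * b),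
    div_pos (by positivity) (Real.sqrt_pos.mpr (by linarith)), fun x hx hx1 => ?_⟩
  have hxq : x ^ q * x ^ (-q) = 1 := by
    rw [← Real.rpow_add hx, add_neg_cancel, Real.rpow_zero]
  have hr : δ * x ^ (-q) ≤ x / 2 := by
    have hpow : x ^ (-q) ≤ x := by
      simpa using Real.rpow_le_rpow_of_exponent_ge hx hx1 (by linarith : (1 : ℝ) ≤ -q)
    have hδ_half : δ ≤ 1 / 2 := min_le_left _ _
    nlinarith [Real.rpow_pos_of_pos hx (-q)]
  refine (le_of_eq ?_).trans (ofReal_mul_rpow_div_sqrt_le_steinDeriv1 hb (x := x)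
    (r := δ * x ^ (-q)) (L := M * x ^ q) (by positivity) (by positivity) ?_)
  · congr 1
    have hxb : x ^ (q * b) = x ^ q * x ^ (-q * (1 - b)) := by
      rw [← Real.rpow_add hx]
      ring_nf
    rw [Real.mul_rpow hδ.le (by positivity), ← Real.rpow_mul hx.le, hxb]
    ring
  · rintro s ⟨hs, hsr⟩
    simp only [mul_abs_rpow_of_pos hx, mul_abs_rpow_of_pos (add_pos hx hs)]
    refine two_div_pi_mul_le_norm_exp_rpow_sub hq ht.le hx hs.le (hsr.trans hr) ?_
    calc t * -(q + 1) * x ^ q * s ≤ t * -(q + 1) * x ^ q * (δ * x ^ (-q)) := by gcongr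
      _ = t * -(q + 1) * δ * (x ^ q * x ^ (-q)) := by ring
      _ ≤ π := by rw [hxq, mul_one]; exact hδπ

theorem stmt17_general (a : ℝ) (ha2 : a < -2) (b : ℝ) (hb1 : b < 1)
    (t₂ : ℝ) (ht₂ : 0 < t₂) :
    ∃ c : ℝ, 0 < c ∧ c < 1 ∧ ∃ κ > 0, ∀ ξ : ℝ, 0 < |ξ| → |ξ| ≤ c →
      ENNReal.ofReal (κ * |ξ| ^ ((1 + a) * b)) ≤
        steinDeriv1 b
          (fun η : ℝ => Complex.exp (Complex.I * (t₂ : ℂ) * ((η * |η| ^ (1 + a) : ℝ) : ℂ))) ξ := by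
  obtain ⟨κ, hκ, hbound⟩ := exists_ofReal_mul_rpow_le_steinDeriv1_exp_phase ha2 hb1 ht₂
  refine ⟨1 / 2, by norm_num, by norm_num, κ, hκ, fun ξ hξ hξc => ?_⟩
  rcases lt_or_gt_of_ne (abs_pos.mp hξ) with hneg | hpos
  · have h := hbound (-ξ) (by linarith) (by rw [abs_of_neg hneg] at hξc; linarith)
    rwa [steinDeriv1_neg_of_conj (exp_I_mul_neg_mul_abs_rpow t₂ (1 + a)), ← abs_of_neg hneg] at h
  · rw [abs_of_pos hpos] at hξc ⊢
    exact hbound ξ hpos (by linarith)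

/-- Pointwise lower bound: for `a ∈ (-5/2,-2)`, `b ∈ (0,1)` and `t₂ > 0`, there are a
sufficiently small `c ∈ (0,1)` and `κ > 0` such that for all `ξ` with `0 < |ξ| ≤ c`,
`𝒟^b(e^{it₂ξ|ξ|^(1+a)})(ξ) ≥ κ |ξ|^{(1+a)b}`. -/
theorem stmt17 (a : ℝ) (ha1 : -(5/2) < a) (ha2 : a < -2) (b : ℝ) (hb0 : 0 < b) (hb1 : b < 1)
    (t₂ : ℝ) (ht₂ : 0 < t₂) :
    ∃ c : ℝ, 0 < c ∧ c < 1 ∧ ∃ κ > 0, ∀ ξ : ℝ, 0 < |ξ| → |ξ| ≤ c →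
      ENNReal.ofReal (κ * |ξ| ^ ((1 + a) * b)) ≤
        steinDeriv1 b
          (fun η : ℝ => Complex.exp (Complex.I * (t₂ : ℂ) * ((η * |η| ^ (1 + a) : ℝ) : ℂ))) ξ :=
  stmt17_general a ha2 b hb1 t₂ ht₂
end
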